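/- Let (R, m) be a Noetherian local ring with infinite residue field and I an m-primary ideal. Then superficial elements for I exist: there is f ∈ I and an integer c such that (I^{n+1} : f) ∩ I^c = I^n for all n ≥ c. -/

import Mathlib

/-- `f` is a superficial element for the ideal `I`:
`(I^(n+1) : f) ∩ I^c = I^n` for all large `n`. -/
def Superficial {R : Type*} [CommRing R] (I : Ideal R) (f : R) : Prop :=
  ∃ c : ℕ, ∀ n ≥ c, (I ^ (n + 1)).colon (Ideal.span {f}) ⊓ I ^ c = I ^ n

/-!
Work in the Rees algebra `R[It]`, which is Noetherian, and take a primary decomposition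
`I R[It] = Q₁ ∩ ⋯ ∩ Qᵣ`. The `a ∈ I` with `a t ∈ √Qᵢ` form an `R`-submodule `Vᵢ` of `I`;
since the residue field is infinite, `I` is not a finite union of proper submodules, so some
`f ∈ I` avoids every proper `Vᵢ`. Choose `c` with `(√Qᵢ)^c ⊆ Qᵢ` for all `i`.
If `x ∈ I^d` with `d ≥ c` and `f x ∈ I^(d+2)`, then `(f t)(x t^d) ∈ I R[It] ⊆ Qᵢ`, so either
`x t^d ∈ Qᵢ` or `f t ∈ √Qᵢ`; in the latter case `Vᵢ = I`, whence `x t^d ∈ (√Qᵢ)^d ⊆ Qᵢ`.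
Thus `x t^d ∈ I R[It]`, i.e. `x ∈ I^(d+1)`, and induction on the exponent turns this into
superficiality.
-/

theorem Superficial.of_mem_pow_succ {R : Type*} [CommRing R] {I : Ideal R} {f : R}
    (hf : f ∈ I) (c : ℕ)
    (h : ∀ d ≥ c, ∀ x ∈ I ^ d, f * x ∈ I ^ (d + 2) → x ∈ I ^ (d + 1)) :
    Superficial I f := by
  refine ⟨c, fun n hn => le_antisymm ?_ fun x hx => ⟨?_, Ideal.pow_le_pow_right hn hx⟩⟩
  · rintro x ⟨hxf, hxc⟩
    rw [SetLike.mem_coe, Ideal.mem_colon_span_singleton, mul_comm] at hxf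
    suffices ∀ k ≤ n, x ∈ I ^ k from this n le_rfl
    intro k hk
    induction k with
    | zero => simp
    | succ k ih =>
      rcases le_or_gt (k + 1) c with hkc | hck
      · exact Ideal.pow_le_pow_right hkc hxc
      · exact h k (by omega) x (ih (by omega)) (Ideal.pow_le_pow_right (by omega) hxf)
  · rw [SetLike.mem_coe, Ideal.mem_colon_span_singleton, pow_succ]
    exact Ideal.mul_mem_mul hx hf

theorem Ideal.exists_forall_radical_pow_le {A : Type*} [CommRing A] [IsNoetherianRing A]
    (s : Finset (Ideal A)) : ∃ n, ∀ Q ∈ s, Q.radical ^ n ≤ Q := by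
  choose k hk using fun Q : Ideal A => Q.exists_radical_pow_le_of_fg (IsNoetherian.noetherian _)
  exact ⟨s.sup k, fun Q hQ => (Ideal.pow_le_pow_right (Finset.le_sup hQ)).trans (hk Q)⟩

open IsLocalRing in
theorem IsLocalRing.exists_forall_notMem_of_ne_top {R M : Type*} [CommRing R] [IsLocalRing R]
    [Infinite (ResidueField R)] [AddCommGroup M] [Module R M] [Module.Finite R M]
    (s : Finset (Submodule R M)) : ∃ x : M, ∀ V ∈ s, V ≠ ⊤ → x ∉ V := by
  classical
  let π := TensorProduct.mk R (ResidueField R) M 1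
  let W (V : Submodule R M) := Submodule.span (ResidueField R) (π '' V)
  have hW (V : Submodule R M) : (W V).restrictScalars R = V.map π := by
    rw [Submodule.restrictScalars_span R _ residue_surjective, Submodule.span_image,
      Submodule.span_eq]
  -- Nakayama: a proper submodule stays proper modulo `𝔪`.
  have htop : ⊤ ∉ (s.filter (· ≠ ⊤)).image W := by
    simp only [Finset.mem_image, Finset.mem_filter, not_exists, not_and]
    intro V ⟨_, hV⟩ hWV
    refine hV (map_tensorProduct_mk_eq_top.mp ?_)
    rw [← hW, hWV, Submodule.restrictScalars_top]
  obtain ⟨e, he⟩ := (Set.ne_univ_iff_exists_notMem _).mp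
    (Subspace.biUnion_ne_univ_of_top_notMem htop)
  obtain ⟨x, rfl⟩ := TensorProduct.mk_surjective R M _ residue_surjective e
  refine ⟨x, fun V hV hVtop hxV => he ?_⟩
  exact Set.mem_biUnion (Finset.mem_image_of_mem W (Finset.mem_filter.mpr ⟨hV, hVtop⟩))
    (Submodule.subset_span (Set.mem_image_of_mem π hxV))

open Polynomial

namespace reesAlgebra

variable {R : Type*} [CommRing R] (I : Ideal R)

/-- `x ↦ x t^d`. -/
noncomputable def monomial (d : ℕ) : ↥(I ^ d) →ₗ[R] reesAlgebra I where
  toFun x := ⟨Polynomial.monomial d (x : R), reesAlgebra.monomial_mem.mpr x.2⟩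
  map_add' _ _ := Subtype.ext (map_add _ _ _)
  map_smul' r x := Subtype.ext (Polynomial.smul_monomial r d (x : R)).symm

variable {I}

@[simp]
theorem coe_monomial {d : ℕ} (x : ↥(I ^ d)) :
    (monomial I d x : R[X]) = Polynomial.monomial d (x : R) := rfl

theorem monomial_mul_monomial {d e : ℕ} (x : ↥(I ^ d)) (y : ↥(I ^ e)) :
    monomial I d x * monomial I e y =
      monomial I (d + e) ⟨x * y, pow_add I d e ▸ Ideal.mul_mem_mul x.2 y.2⟩ :=
  Subtype.ext (Polynomial.monomial_mul_monomial d e (x : R) y)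

theorem coeff_mem_pow_succ {p : reesAlgebra I}
    (hp : p ∈ I.map (algebraMap R (reesAlgebra I))) (d : ℕ) :
    (p : R[X]).coeff d ∈ I ^ (d + 1) := by
  rw [← Submodule.restrictScalars_mem R, ← Ideal.smul_top_eq_map] at hp
  refine Submodule.smul_induction_on hp (fun a ha q _ => ?_) (fun p q hp hq => ?_)
  · rw [pow_succ']
    simpa using Ideal.mul_mem_mul ha (q.2 d)
  · simpa using add_mem hp hq

theorem monomial_mem_map_iff {d : ℕ} (x : ↥(I ^ d)) :
    monomial I d x ∈ I.map (algebraMap R (reesAlgebra I)) ↔ (x : R) ∈ I ^ (d + 1) := by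
  refine ⟨fun hx => by simpa using coeff_mem_pow_succ hx d, fun hx => ?_⟩
  rw [← Submodule.restrictScalars_mem R, ← Ideal.smul_top_eq_map]
  refine Submodule.smul_top_le_comap_smul_top I (monomial I d) ?_
  rwa [Submodule.mem_smul_top_iff, smul_eq_mul, ← pow_succ']

theorem monomial_mem_pow {P : Ideal (reesAlgebra I)} (hP : ∀ a, monomial I 1 a ∈ P) :
    ∀ {d : ℕ} (x : ↥(I ^ d)), monomial I d x ∈ P ^ d
  | 0, _ => by simp
  | d + 1, ⟨x, hx⟩ => by
    refine Submodule.mul_induction_on'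
      (C := fun y hy => monomial I (d + 1) ⟨y, pow_succ I d ▸ hy⟩ ∈ P ^ (d + 1)) ?_ ?_
      (pow_succ I d ▸ hx : x ∈ I ^ d * I)
    · intro y hy a ha
      rw [← monomial_mul_monomial ⟨y, hy⟩ ⟨a, (pow_one I).symm ▸ ha⟩, pow_succ]
      exact Ideal.mul_mem_mul (monomial_mem_pow hP _) (hP _)
    · intro y _ z _ hy hz
      exact (map_add (monomial I (d + 1)) ⟨y, _⟩ ⟨z, _⟩).symm ▸ add_mem hy hz

theorem monomial_mem_of_mul_mem {Q : Ideal (reesAlgebra I)} (hQ : Q.IsPrimary) {c : ℕ}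
    (hc : Q.radical ^ c ≤ Q) {f : ↥(I ^ 1)}
    (hf : monomial I 1 f ∈ Q.radical → ∀ a, monomial I 1 a ∈ Q.radical)
    {d : ℕ} (hd : c ≤ d) (x : ↥(I ^ d)) (hfx : monomial I 1 f * monomial I d x ∈ Q) :
    monomial I d x ∈ Q := by
  rw [mul_comm] at hfx
  rcases (Ideal.isPrimary_iff.mp hQ).2 hfx with hx | hfQ
  · exact hx
  · exact hc (Ideal.pow_le_pow_right hd (monomial_mem_pow (hf hfQ) x))

end reesAlgebra

open reesAlgebra in
theorem exists_superficial_general (R : Type*) [CommRing R] [IsNoetherianRing R]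
    [IsLocalRing R] [Infinite (IsLocalRing.ResidueField R)]
    (I : Ideal R) :
    ∃ f ∈ I, Superficial I f := by
  obtain ⟨s : Finset (Ideal (reesAlgebra I)), hs, hprimary⟩ :=
    Submodule.isLasker (reesAlgebra I) (reesAlgebra I) (I.map (algebraMap R (reesAlgebra I)))
  obtain ⟨c, hc⟩ := Ideal.exists_forall_radical_pow_le s
  obtain ⟨f, hf⟩ := IsLocalRing.exists_forall_notMem_of_ne_top
    (s.image fun Q => (Q.radical.restrictScalars R).comap (monomial I 1))
  have hf_avoid (Q) (hQ : Q ∈ s) (hfQ : monomial I 1 f ∈ Q.radical) (a) :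
      monomial I 1 a ∈ Q.radical :=
    Submodule.eq_top_iff'.mp (not_imp_not.mp (hf _ (Finset.mem_image_of_mem _ hQ)) hfQ) a
  have hfI : (f : R) ∈ I := by simpa using f.2
  refine ⟨f, hfI, Superficial.of_mem_pow_succ hfI c fun d hd x hx hfx => ?_⟩
  have hfξ : monomial I 1 f * monomial I d ⟨x, hx⟩ ∈ s.inf id := by
    rw [hs, reesAlgebra.monomial_mul_monomial, monomial_mem_map_iff]
    simpa [add_comm 1 d] using hfx
  rw [← monomial_mem_map_iff ⟨x, hx⟩, ← hs]
  simp only [Submodule.mem_finsetInf, id] at hfξ ⊢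
  exact fun Q hQ =>
    monomial_mem_of_mul_mem (hprimary hQ) (hc Q hQ) (hf_avoid Q hQ) hd _ (hfξ Q hQ)

/-- In a Noetherian local ring with infinite residue field, every `m`-primary
ideal admits a superficial element. -/
theorem exists_superficial (R : Type*) [CommRing R] [IsNoetherianRing R]
    [IsLocalRing R] [Infinite (IsLocalRing.ResidueField R)]
    (I : Ideal R) (hprim : I.radical = IsLocalRing.maximalIdeal R) :
    ∃ f ∈ I, Superficial I f :=
  exists_superficial_general R I
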